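/- For k > 0 and ρ ∈ (-1, 1), the function L(β) = (kβ² + β - 1)² + 2(1-ρ)β²(1-β)k attains a unique global minimum over ℝ at some β* ∈ (0, 2), and moreover L''(β*) > 0. -/

import Mathlib

/-!
Writing `u = k β²` and `v = β - 1`, the loss is the positive definite quadratic form
`Q(u, v) = u² + 2ρuv + v²` restricted to the parabola `u = k (v + 1)²`. The region above this
parabola is convex and misses the origin, and `Q` is strictly convex and 2-homogeneous, so every
point above the parabola can be pushed towards the origin onto the parabola without increasing
`Q`. This gives uniqueness of the global minimiser (via the midpoint of two minimisers) and, at the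
minimiser, `∂Q/∂u ≥ 0`; the latter makes the curvature term of `L''` nonnegative, so `L'' > 0`.
Locating the minimiser in `(0, 2)` is a comparison of values and of the sign of `L'`, using
`L = (1+ρ)/2 · (kβ² + β - 1)² + (1-ρ)/2 · (kβ² - β + 1)²`.
-/

open Filter Set

noncomputable def welfareLoss (k ρ b : ℝ) : ℝ :=
  (k*b^2 + b - 1)^2 + 2*(1-ρ)*b^2*(1-b)*k

noncomputable def corrQuadForm (ρ u v : ℝ) : ℝ :=
  u^2 + 2*ρ*u*v + v^2

section CorrQuadForm

variable {ρ : ℝ}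

lemma mul_sq_le_corrQuadForm (ρ u v : ℝ) : (1 - ρ^2) * v^2 ≤ corrQuadForm ρ u v := by
  unfold corrQuadForm
  nlinarith [sq_nonneg (u + ρ*v)]

lemma corrQuadForm_nonneg (hρ : |ρ| ≤ 1) (u v : ℝ) : 0 ≤ corrQuadForm ρ u v := by
  have : ρ^2 ≤ 1 := by nlinarith [sq_abs ρ, abs_nonneg ρ]
  nlinarith [mul_sq_le_corrQuadForm ρ u v, sq_nonneg v]

lemma corrQuadForm_pos (hρ : |ρ| < 1) (u : ℝ) {v : ℝ} (hv : v ≠ 0) : 0 < corrQuadForm ρ u v := by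
  have : ρ^2 < 1 := by nlinarith [sq_abs ρ, abs_nonneg ρ]
  nlinarith [mul_sq_le_corrQuadForm ρ u v, sq_pos_of_ne_zero hv]

lemma corrQuadForm_add_corrQuadForm (ρ u v u' v' : ℝ) :
    corrQuadForm ρ u v + corrQuadForm ρ u' v' =
      2 * corrQuadForm ρ ((u + u')/2) ((v + v')/2) + 2 * corrQuadForm ρ ((u - u')/2) ((v - v')/2) := by
  unfold corrQuadForm
  ring

end CorrQuadForm

section WelfareLoss

variable {k ρ : ℝ}

lemma welfareLoss_eq_corrQuadForm (k ρ b : ℝ) :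
    welfareLoss k ρ b = corrQuadForm ρ (k*b^2) (b - 1) := by
  unfold welfareLoss corrQuadForm
  ring

lemma welfareLoss_eq_average (k ρ b : ℝ) :
    welfareLoss k ρ b = (1+ρ)/2 * (k*b^2 + b - 1)^2 + (1-ρ)/2 * (k*b^2 - b + 1)^2 := by
  unfold welfareLoss
  ring

lemma welfareLoss_zero (k ρ : ℝ) : welfareLoss k ρ 0 = 1 := by
  norm_num [welfareLoss]

lemma hasDerivAt_welfareLoss (k ρ x : ℝ) :
    HasDerivAt (welfareLoss k ρ) (4*k^2*x^3 + 6*k*ρ*x^2 + 2*(1-2*k*ρ)*x - 2) x := by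
  have hP : HasDerivAt (fun b : ℝ => k*b^2 + b - 1) (2*k*x + 1) x :=
    ((((hasDerivAt_pow 2 x).const_mul k).add (hasDerivAt_id x)).sub_const 1).congr_deriv
      (by simp; ring)
  have hR := (((hasDerivAt_pow 2 x).const_mul (2*(1-ρ))).mul
    ((hasDerivAt_id x).const_sub 1)).mul_const k
  refine ((hP.pow 2).add hR).congr_deriv ?_
  simp
  ring

lemma deriv_welfareLoss (k ρ : ℝ) :
    deriv (welfareLoss k ρ) = fun x => 4*k^2*x^3 + 6*k*ρ*x^2 + 2*(1-2*k*ρ)*x - 2 :=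
  funext fun x => (hasDerivAt_welfareLoss k ρ x).deriv

lemma deriv_deriv_welfareLoss (k ρ : ℝ) :
    deriv (deriv (welfareLoss k ρ)) = fun x => 12*k^2*x^2 + 12*k*ρ*x + 2 - 4*k*ρ := by
  rw [deriv_welfareLoss]
  funext x
  refine ((((((hasDerivAt_pow 3 x).const_mul (4*k^2)).add
    ((hasDerivAt_pow 2 x).const_mul (6*k*ρ))).add
    ((hasDerivAt_id x).const_mul (2*(1-2*k*ρ)))).sub_const 2).congr_deriv ?_).deriv
  simp
  ring

lemma exists_forall_welfareLoss_le (hρ : |ρ| < 1) :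
    ∃ β, ∀ b, welfareLoss k ρ β ≤ welfareLoss k ρ b := by
  have hc : 0 < 1 - ρ^2 := by nlinarith [sq_abs ρ, abs_nonneg ρ]
  have hcont : Continuous (welfareLoss k ρ) := by
    unfold welfareLoss
    fun_prop
  refine hcont.exists_forall_le (tendsto_atTop_mono (fun b => ?_)
    (tendsto_atTop_add_const_right _ (-(1 - ρ^2))
      (((tendsto_pow_atTop two_ne_zero).comp tendsto_norm_cocompact_atTop).const_mul_atTop
        (half_pos hc))))
  rw [welfareLoss_eq_corrQuadForm]
  have := mul_sq_le_corrQuadForm ρ (k*b^2) (b - 1)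
  simp only [Function.comp_apply, Real.norm_eq_abs, sq_abs]
  nlinarith [mul_nonneg hc.le (sq_nonneg (b - 2))]

/-- The witness is where the segment from `(u, v)` to the origin crosses the parabola; `Q` is
2-homogeneous. -/
lemma exists_welfareLoss_le_corrQuadForm (hk : 0 ≤ k) (hρ : |ρ| ≤ 1) {u v : ℝ}
    (h : k*(v+1)^2 ≤ u) : ∃ b, welfareLoss k ρ b ≤ corrQuadForm ρ u v := by
  obtain ⟨t, ⟨ht0, ht1⟩, ht⟩ : ∃ t ∈ Icc (0:ℝ) 1, k*(t*v+1)^2 - t*u = 0 :=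
    intermediate_value_Icc' zero_le_one (by fun_prop) ⟨by linarith, by norm_num; linarith⟩
  have hQ : welfareLoss k ρ (t*v + 1) = t^2 * corrQuadForm ρ u v := by
    rw [welfareLoss_eq_corrQuadForm, show k*(t*v+1)^2 = t*u by linarith]
    unfold corrQuadForm
    ring
  refine ⟨t*v + 1, ?_⟩
  rw [hQ]
  nlinarith [corrQuadForm_nonneg hρ u v, mul_le_one₀ ht1 ht0 ht1]

variable {β : ℝ}

lemma welfareLoss_lt_of_forall_le (hk : 0 ≤ k) (hρ : |ρ| < 1)
    (hmin : ∀ x, welfareLoss k ρ β ≤ welfareLoss k ρ x) {b : ℝ} (hb : b ≠ β) :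
    welfareLoss k ρ β < welfareLoss k ρ b := by
  by_contra! hle
  obtain ⟨x, hx⟩ := exists_welfareLoss_le_corrQuadForm hk hρ.le
    (u := (k*β^2 + k*b^2)/2) (v := ((β - 1) + (b - 1))/2) (by nlinarith [sq_nonneg (β - b)])
  have hgap := corrQuadForm_pos hρ ((k*β^2 - k*b^2)/2) (v := ((β - 1) - (b - 1))/2)
    (by intro h; exact hb (by linarith))
  have hpar := corrQuadForm_add_corrQuadForm ρ (k*β^2) (β - 1) (k*b^2) (b - 1)
  rw [welfareLoss_eq_corrQuadForm] at hle
  linarith [hmin x, welfareLoss_eq_corrQuadForm k ρ β]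

lemma add_mul_nonneg_of_forall_welfareLoss_le (hk : 0 ≤ k) (hρ : |ρ| ≤ 1)
    (hmin : ∀ x, welfareLoss k ρ β ≤ welfareLoss k ρ x) :
    0 ≤ k*β^2 + ρ*(β - 1) := by
  by_contra! hneg
  -- raising `u = kβ²` by `t = -(kβ² + ρ(β - 1))` lowers `Q` by `t²`
  obtain ⟨x, hx⟩ := exists_welfareLoss_le_corrQuadForm hk hρ
    (u := k*β^2 - (k*β^2 + ρ*(β - 1))) (v := β - 1) (by nlinarith)
  have hβx := hmin x
  rw [welfareLoss_eq_corrQuadForm] at hβx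
  unfold corrQuadForm at hx hβx
  nlinarith

lemma deriv_deriv_welfareLoss_pos (hk : 0 ≤ k) (hρ : |ρ| < 1) (hβ : 0 ≤ k*β^2 + ρ*(β - 1)) :
    0 < deriv (deriv (welfareLoss k ρ)) β := by
  rw [deriv_deriv_welfareLoss]
  -- `L''(β) = 2 Q(2kβ, 1) + 4k (kβ² + ρ(β - 1))`
  have h := corrQuadForm_pos hρ (2*k*β) one_ne_zero
  unfold corrQuadForm at h
  nlinarith [mul_nonneg hk hβ]

end WelfareLoss

section Location

variable {k ρ : ℝ}

lemma one_lt_welfareLoss (hk : 0 ≤ k) (hρ : ρ ≤ 1) {b : ℝ} (hb : b < 0) (hkb : -1 < k*b) :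
    1 < welfareLoss k ρ b := by
  have hP : k*b^2 + b - 1 < -1 := by nlinarith
  have hR : 0 ≤ 2*(1-ρ)*b^2*(1-b)*k := by
    have : 0 ≤ 1 - b := by linarith
    positivity
  unfold welfareLoss
  nlinarith

/-- `b ↦ b'` with `k (b + b') = -1` is the reflection fixing `k b² + b`. -/
lemma welfareLoss_lt_of_add_eq (hk : 0 < k) (hρ : ρ < 1) {b b' : ℝ}
    (hsum : k*(b + b') = -1) (hlt : b < b') : welfareLoss k ρ b' < welfareLoss k ρ b := by
  have hneg : b + b' < 0 := by nlinarith
  have hP : k*b'^2 + b' - 1 = k*b^2 + b - 1 := by linear_combination (b' - b) * hsum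
  have hM : 0 < (k*b^2 - b + 1)^2 - (k*b'^2 - b' + 1)^2 := by
    have hsq : (k*b^2 - b + 1)^2 - (k*b'^2 - b' + 1)^2
        = 2*(b' - b) * (k*(b^2 + b'^2) - (b + b') + 2) := by
      linear_combination ((k*b^2 - b + 1 + (k*b'^2 - b' + 1)) * (b - b')) * hsum
    rw [hsq]
    exact mul_pos (by linarith) (by nlinarith [sq_nonneg b, sq_nonneg b'])
  rw [welfareLoss_eq_average, welfareLoss_eq_average, hP]
  nlinarith

/-- The witness is a root `s ∈ (1, 2)` of `k s² - s + 1`, where the second square of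
`welfareLoss_eq_average` vanishes. -/
lemma exists_forall_welfareLoss_lt_of_two_le (hk : 0 ≤ k) (hk4 : k < 1/4) (hρ : |ρ| < 1) :
    ∃ s, ∀ x, 2 ≤ x → welfareLoss k ρ s < welfareLoss k ρ x := by
  obtain ⟨hρ₁, hρ₂⟩ := abs_lt.mp hρ
  obtain ⟨s, ⟨hs1, hs2⟩, hs⟩ : ∃ s ∈ Icc (1:ℝ) 2, k*s^2 - s + 1 = 0 :=
    intermediate_value_Icc' one_le_two (by fun_prop) ⟨by norm_num; linarith, by norm_num; linarith⟩
  refine ⟨s, fun x hx => ?_⟩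
  have hPs : k*s^2 + s - 1 = 2*(k*s^2) := by linear_combination -hs
  have hPx : 2*(k*s^2) < k*x^2 + x - 1 := by
    nlinarith [mul_le_mul_of_nonneg_left (show s^2 ≤ 4 by nlinarith) hk,
      mul_le_mul_of_nonneg_left (show 4 ≤ x^2 by nlinarith) hk]
  rw [welfareLoss_eq_average, welfareLoss_eq_average, hs, hPs]
  have hks : 0 ≤ k*s^2 := by nlinarith
  nlinarith [mul_lt_mul'' hPx hPx (by positivity) (by positivity), sq_nonneg (k*x^2 - x + 1)]

/-- For `k ≥ 1/4`, both `kx² ± x ∓ 1` and their derivatives are nonnegative on `[2, ∞)`. -/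
lemma deriv_welfareLoss_pos (hk4 : 1/4 ≤ k) (hρ : |ρ| < 1) {x : ℝ} (hx : 2 ≤ x) :
    0 < deriv (welfareLoss k ρ) x := by
  obtain ⟨hρ₁, hρ₂⟩ := abs_lt.mp hρ
  have hL' : 4*k^2*x^3 + 6*k*ρ*x^2 + 2*(1-2*k*ρ)*x - 2
      = (1+ρ)*((k*x^2 + x - 1)*(2*k*x + 1)) + (1-ρ)*((k*x^2 - x + 1)*(2*k*x - 1)) := by ring
  have hM : 0 ≤ k*x^2 - x + 1 := by nlinarith [sq_nonneg (x/2 - 1)]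
  have hP : 0 < (k*x^2 + x - 1)*(2*k*x + 1) := by
    apply mul_pos <;> nlinarith
  rw [(hasDerivAt_welfareLoss k ρ x).deriv, hL']
  have : 0 ≤ (k*x^2 - x + 1)*(2*k*x - 1) := mul_nonneg hM (by nlinarith)
  nlinarith

variable {β : ℝ}

lemma pos_of_forall_welfareLoss_le (hk : 0 < k) (hρ : ρ < 1)
    (hmin : ∀ x, welfareLoss k ρ β ≤ welfareLoss k ρ x) : 0 < β := by
  by_contra! hβ
  rcases lt_or_ge (2*k*β) (-1) with hfar | hnear
  · have hlt : β < -1/k - β := by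
      have : -1/k - β - β = (-1 - 2*k*β)/k := by field_simp; ring
      linarith [div_pos (show 0 < -1 - 2*k*β by linarith) hk]
    have hsum : k*(β + (-1/k - β)) = -1 := by field_simp; ring
    linarith [welfareLoss_lt_of_add_eq hk hρ hsum hlt, hmin (-1/k - β)]
  · rcases hβ.lt_or_eq with hneg | rfl
    · linarith [one_lt_welfareLoss hk.le hρ.le hneg (by linarith), hmin 0, welfareLoss_zero k ρ]
    · have := (show IsLocalMin (welfareLoss k ρ) 0 from Eventually.of_forall hmin).deriv_eq_zero
      rw [deriv_welfareLoss] at this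
      norm_num at this

lemma lt_two_of_forall_welfareLoss_le (hk : 0 < k) (hρ : |ρ| < 1)
    (hmin : ∀ x, welfareLoss k ρ β ≤ welfareLoss k ρ x) : β < 2 := by
  by_contra! hβ
  rcases lt_or_ge k (1/4) with hk4 | hk4
  · obtain ⟨s, hs⟩ := exists_forall_welfareLoss_lt_of_two_le hk.le hk4 hρ
    exact (hs β hβ).not_ge (hmin s)
  · have hcrit := (show IsLocalMin (welfareLoss k ρ) β from Eventually.of_forall hmin).deriv_eq_zero
    exact (deriv_welfareLoss_pos hk4 hρ hβ).ne' hcrit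

end Location

/-- L attains a unique global minimum over ℝ at some β* ∈ (0,2), and L''(β*) > 0. -/
theorem stmt_5 (k ρ : ℝ) (hk : 0 < k) (hρ : ρ ∈ Set.Ioo (-1 : ℝ) 1) :
    ∃ β : ℝ, β ∈ Set.Ioo (0 : ℝ) 2 ∧
      (∀ b : ℝ, b ≠ β →
        (k*β^2 + β - 1)^2 + 2*(1-ρ)*β^2*(1-β)*k <
        (k*b^2 + b - 1)^2 + 2*(1-ρ)*b^2*(1-b)*k) ∧
      deriv (deriv (fun b : ℝ => (k*b^2 + b - 1)^2 + 2*(1-ρ)*b^2*(1-b)*k)) β > 0 := by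
  have hρ' : |ρ| < 1 := abs_lt.mpr hρ
  obtain ⟨β, hmin⟩ := exists_forall_welfareLoss_le (k := k) hρ'
  exact ⟨β, ⟨pos_of_forall_welfareLoss_le hk hρ.2 hmin, lt_two_of_forall_welfareLoss_le hk hρ' hmin⟩,
    fun b hb => welfareLoss_lt_of_forall_le hk.le hρ' hmin hb,
    deriv_deriv_welfareLoss_pos hk.le hρ' (add_mul_nonneg_of_forall_welfareLoss_le hk.le hρ'.le hmin)⟩
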